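/- arXiv:1601.04370 — 2 statements merged into one kernel-verified Lean document; each statement's English description precedes it below -/
import Mathlib

section
/- The Thue–Morse sequence on {1,−1} is Apwenian: for every positive integer n, 2^(n−1) divides the Hankel determinant H_n(e) and H_n(e)/2^(n−1) is an odd integer. -/
/-!
Subtracting from each row of the Hankel matrix of an odd sequence `c` the row above it leaves
the first row odd and all the others even, so `H_{n+1}(c) = 2^n b`, where `b` is congruent
mod 2 to the determinant of the matrix `G_n(d)` made of a row of ones above the rows
`(d (i + j))_j`, `i < n`, of the Hankel matrix of `d k = (c (k + 1) - c k) / 2`.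

For Thue–Morse, `d` mod 2 satisfies `d (2k) = 1` and `d (2k + 1) = d k + 1`, and we sort rows
and columns by parity. The Hankel matrix `H_{2m}(d)` becomes `[[J, J + A], [J + A, J]]` with
`J` all ones and `A = H_m(d)`, whose determinant is `det A * det (-A)`. In the other cases we
first add 1 to `d` (in `G` by a row operation, in `H` at the cost of a border of ones): this kills
the entries at even positions and turns those at odd positions back into `d`, so the sorted
matrix is block triangular up to a swap of blocks. Over `ZMod 2` this gives
`det H_{2m} = (det H_m)^2`, `det H_{2m+1} = (det G_m)^2` and `det G_{p+q} = det G_q * det H_p`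
for `p = ⌈(p + q) / 2⌉`, so all of them equal 1 by induction.
-/

/-- The Hankel determinant of order `n` of the sequence `c`. -/
def hankel (c : ℕ → ℤ) (n : ℕ) : ℤ :=
  Matrix.det (Matrix.of fun i j : Fin n => c (i.1 + j.1))

open Matrix

section General

variable {R : Type*} [CommRing R]

def hankelMatrix (s : ℕ → R) (n : ℕ) : Matrix (Fin n) (Fin n) R :=
  of fun i j => s (i + j)

def onesAboveHankel (s : ℕ → R) (n : ℕ) : Matrix (Fin (n + 1)) (Fin (n + 1)) R :=
  of fun i j => if i = 0 then 1 else s (i + j - 1)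

def borderedHankel (s : ℕ → R) (n : ℕ) : Matrix (Fin (n + 1)) (Fin (n + 1)) R :=
  of fun i j => if i = 0 ∨ j = 0 then 1 else s (i + j - 2)

theorem det_onesAboveHankel_add_const (s : ℕ → R) (c : R) (n : ℕ) :
    (onesAboveHankel (fun k => s k + c) n).det = (onesAboveHankel s n).det :=
  det_eq_of_forall_row_eq_smul_add_const (fun i => if i = 0 then 0 else c) 0 rfl
    fun i j => by by_cases hi : i = 0 <;> simp [onesAboveHankel, hi]

theorem det_borderedHankel_add_one (s : ℕ → R) (n : ℕ) :
    (borderedHankel (fun k => s k + 1) n).det = (hankelMatrix s n).det := by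
  set B : Matrix (Fin (n + 1)) (Fin (n + 1)) R :=
    of fun i j => if i = 0 then 1 else if j = 0 then 0 else s (i + j - 2)
  have hrows : (borderedHankel (fun k => s k + 1) n).det = B.det :=
    det_eq_of_forall_row_eq_smul_add_const (fun i => if i = 0 then 0 else 1) 0 rfl
      fun i j => by
        by_cases hi : i = 0 <;> by_cases hj : j = 0 <;>
          simp [borderedHankel, B, hi, hj, add_comm]
  have hminor : B.submatrix Fin.succ Fin.succ = hankelMatrix s n := by
    ext i j
    simp only [B, hankelMatrix, submatrix_apply, of_apply, Fin.succ_ne_zero, if_false,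
      Fin.val_succ]
    congr 1
    omega
  rw [hrows, det_succ_column_zero, Fin.sum_univ_succ, Finset.sum_eq_zero fun i _ => by simp [B]]
  simp [B, hminor]

theorem det_fromBlocks_eq_det_add_mul_det_sub {n : Type*} [Fintype n] [DecidableEq n]
    (P Q : Matrix n n R) : (fromBlocks P Q Q P).det = (P + Q).det * (P - Q).det := by
  have h : fromBlocks 1 0 (-1) 1 * fromBlocks P Q Q P * fromBlocks 1 0 1 1 =
      fromBlocks (P + Q) Q 0 (P - Q) := by
    simp [fromBlocks_multiply, sub_eq_neg_add]
  have hL : (fromBlocks 1 0 (-1) 1 : Matrix (n ⊕ n) (n ⊕ n) R).det = 1 := by simp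
  have hR : (fromBlocks 1 0 1 1 : Matrix (n ⊕ n) (n ⊕ n) R).det = 1 := by simp
  rw [← det_fromBlocks_zero₂₁, ← h, det_mul, det_mul, hL, hR, one_mul, mul_one]

theorem det_fromBlocks_zero₂₂_of_charTwo [CharP R 2] {n : Type*} [Fintype n] [DecidableEq n]
    (A B C : Matrix n n R) : (fromBlocks A B C 0).det = B.det * C.det := by
  have h : fromBlocks A B C 0 = (fromBlocks B A 0 C).submatrix id (Equiv.sumComm n n) := by
    ext (i | i) (j | j) <;> rfl
  rw [h, det_permute', det_fromBlocks_zero₂₁]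
  rcases Int.units_eq_one_or (Equiv.Perm.sign (Equiv.sumComm n n)) with hs | hs <;>
    simp [hs, CharTwo.neg_eq]

end General

section EvenOdd

variable {p q n : ℕ} (hn : p + q = n) (hqp : q ≤ p) (hpq : p ≤ q + 1)

noncomputable def evenOddEquiv : Fin p ⊕ Fin q ≃ Fin n :=
  Equiv.ofBijective (Sum.elim (fun i => ⟨2 * i, by omega⟩) fun j => ⟨2 * j + 1, by omega⟩) <| by
    refine (Fintype.bijective_iff_injective_and_card _).2 ⟨?_, by simp [hn]⟩
    rintro (i | i) (j | j) h <;> simp [Fin.ext_iff] at h ⊢ <;> omega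

@[simp] theorem evenOddEquiv_inl (i : Fin p) : (evenOddEquiv hn hqp hpq (.inl i) : ℕ) = 2 * i :=
  rfl

@[simp] theorem evenOddEquiv_inr (j : Fin q) :
    (evenOddEquiv hn hqp hpq (.inr j) : ℕ) = 2 * j + 1 :=
  rfl

theorem evenOddEquiv_inl_eq_zero [NeZero n] (i : Fin p) :
    evenOddEquiv hn hqp hpq (.inl i) = 0 ↔ (i : ℕ) = 0 := by
  simp [Fin.ext_iff]

theorem evenOddEquiv_inr_ne_zero [NeZero n] (j : Fin q) : evenOddEquiv hn hqp hpq (.inr j) ≠ 0 := by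
  simp [Fin.ext_iff]

end EvenOdd

theorem hankel_of_odd (c : ℕ → ℤ) (hc : ∀ k, Odd (c k)) (n : ℕ) :
    ∃ b : ℤ, hankel c (n + 1) = 2 ^ n * b ∧
      (b : ZMod 2) = (onesAboveHankel (fun k => (((c (k + 1) - c k) / 2 : ℤ) : ZMod 2)) n).det := by
  set B : Matrix (Fin (n + 1)) (Fin (n + 1)) ℤ :=
    of fun i j => if i = 0 then c j else (c (i + j) - c (i + j - 1)) / 2
  refine ⟨B.det, ?_, ?_⟩
  · have hrows : hankel c (n + 1) = (of fun i j => (if i = 0 then 1 else 2) * B i j).det :=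
      det_eq_of_forall_row_eq_smul_add_pred (fun _ => 1) (fun j => by simp [B]) fun i j => by
        have hdvd : 2 ∣ c (i + 1 + j) - c (i + j) := even_iff_two_dvd.1 ((hc _).sub_odd (hc _))
        simp [B, Fin.succ_ne_zero, Int.mul_ediv_cancel' hdvd]
    rw [hrows, det_mul_column, Fin.prod_univ_succ]
    simp [Fin.succ_ne_zero]
  · rw [Int.cast_det]
    congr 1
    ext i j
    by_cases hi : i = 0
    · simp [B, onesAboveHankel, hi, ZMod.intCast_eq_one_iff_odd.2 (hc j)]
    · have : (i : ℕ) + j - 1 + 1 = i + j := by have := Fin.val_ne_zero_iff.2 hi; omega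
      simp [B, onesAboveHankel, hi, this]

section ParityRecursion

variable {D : ℕ → ZMod 2}

theorem add_one_eq_zero_of_eq_two_mul (hD₀ : ∀ k, D (2 * k) = 1) {n k : ℕ} (h : n = 2 * k) :
    D n + 1 = 0 := by
  rw [h, hD₀]; rfl

theorem add_one_eq_of_eq_two_mul_add_one (hD₁ : ∀ k, D (2 * k + 1) = D k + 1) {n k : ℕ}
    (h : n = 2 * k + 1) : D n + 1 = D k := by
  rw [h, hD₁, CharTwo.add_cancel_right]

theorem det_hankelMatrix_two_mul (hD₀ : ∀ k, D (2 * k) = 1)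
    (hD₁ : ∀ k, D (2 * k + 1) = D k + 1) (m : ℕ) :
    (hankelMatrix D (2 * m)).det = (hankelMatrix D m).det ^ 2 := by
  set e := evenOddEquiv (two_mul m).symm le_rfl (Nat.le_succ m)
  set J : Matrix (Fin m) (Fin m) (ZMod 2) := of fun _ _ => 1
  set Q : Matrix (Fin m) (Fin m) (ZMod 2) := of fun i j => 1 + D (i + j)
  have hblocks : (hankelMatrix D (2 * m)).submatrix e e = fromBlocks J Q Q J := by
    ext (i | i) (j | j) <;> simp only [e, J, Q, hankelMatrix, submatrix_apply, of_apply,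
      fromBlocks_apply₁₁, fromBlocks_apply₁₂, fromBlocks_apply₂₁, fromBlocks_apply₂₂,
      evenOddEquiv_inl, evenOddEquiv_inr]
    · rw [show 2 * (i : ℕ) + 2 * j = 2 * (i + j) by ring, hD₀]
    · rw [show 2 * (i : ℕ) + (2 * j + 1) = 2 * (i + j) + 1 by ring, hD₁, add_comm]
    · rw [show 2 * (i : ℕ) + 1 + 2 * j = 2 * (i + j) + 1 by ring, hD₁, add_comm]
    · rw [show 2 * (i : ℕ) + 1 + (2 * j + 1) = 2 * (i + j + 1) by ring, hD₀]
  have hJQ : J + Q = hankelMatrix D m := by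
    ext i j; exact CharTwo.add_cancel_left _ _
  have hJQ' : J - Q = hankelMatrix D m := by
    ext i j; exact (CharTwo.sub_eq_add _ _).trans (CharTwo.add_cancel_left _ _)
  rw [← det_submatrix_equiv_self e, hblocks, det_fromBlocks_eq_det_add_mul_det_sub, hJQ, hJQ', sq]

theorem det_hankelMatrix_two_mul_add_one (hD₀ : ∀ k, D (2 * k) = 1)
    (hD₁ : ∀ k, D (2 * k + 1) = D k + 1) (m : ℕ) :
    (hankelMatrix D (2 * m + 1)).det = (onesAboveHankel D m).det ^ 2 := by
  set e := evenOddEquiv (show (m + 1) + (m + 1) = 2 * m + 1 + 1 by ring) le_rfl (Nat.le_succ _)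
  rw [← det_borderedHankel_add_one, ← det_submatrix_equiv_self e]
  set M := (borderedHankel (fun k => D k + 1) (2 * m + 1)).submatrix e e
  have h₁₂ : M.toBlocks₁₂ = onesAboveHankel D m := by
    ext i j
    simp only [M, e, toBlocks₁₂, borderedHankel, onesAboveHankel, of_apply, submatrix_apply,
      evenOddEquiv_inl_eq_zero, evenOddEquiv_inr_ne_zero, Fin.val_eq_zero_iff, or_false,
      evenOddEquiv_inl, evenOddEquiv_inr]
    split_ifs with hi
    · rfl
    · have := Fin.val_ne_zero_iff.2 hi
      exact add_one_eq_of_eq_two_mul_add_one hD₁ (by omega)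
  have h₂₁ : M.toBlocks₂₁ = (onesAboveHankel D m)ᵀ := by
    ext i j
    simp only [M, e, toBlocks₂₁, borderedHankel, onesAboveHankel, of_apply, submatrix_apply,
      transpose_apply, evenOddEquiv_inl_eq_zero, evenOddEquiv_inr_ne_zero, Fin.val_eq_zero_iff,
      false_or, evenOddEquiv_inl, evenOddEquiv_inr]
    split_ifs with hj
    · rfl
    · have := Fin.val_ne_zero_iff.2 hj
      exact add_one_eq_of_eq_two_mul_add_one hD₁ (by omega)
  have h₂₂ : M.toBlocks₂₂ = 0 := by
    ext i j
    simp only [M, e, toBlocks₂₂, borderedHankel, of_apply, submatrix_apply, Matrix.zero_apply,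
      evenOddEquiv_inr_ne_zero, or_self, if_false, evenOddEquiv_inr]
    exact add_one_eq_zero_of_eq_two_mul hD₀ (k := i + j) (by omega)
  rw [← fromBlocks_toBlocks M, h₁₂, h₂₁, h₂₂, det_fromBlocks_zero₂₂_of_charTwo, det_transpose, sq]

theorem det_onesAboveHankel_of_add_eq (hD₀ : ∀ k, D (2 * k) = 1)
    (hD₁ : ∀ k, D (2 * k + 1) = D k + 1) {p q n : ℕ} (hn : p + q = n) (hqp : q ≤ p)
    (hpq : p ≤ q + 1) :
    (onesAboveHankel D n).det = (onesAboveHankel D q).det * (hankelMatrix D p).det := by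
  set e := evenOddEquiv (show (q + 1) + p = n + 1 by omega) (by omega) (by omega)
  rw [← det_onesAboveHankel_add_const D 1, ← det_submatrix_equiv_self e]
  set M := (onesAboveHankel (fun k => D k + 1) n).submatrix e e
  have h₁₁ : M.toBlocks₁₁ = onesAboveHankel D q := by
    ext i j
    simp only [M, e, toBlocks₁₁, onesAboveHankel, of_apply, submatrix_apply,
      evenOddEquiv_inl_eq_zero, Fin.val_eq_zero_iff, evenOddEquiv_inl]
    split_ifs with hi
    · rfl
    · have := Fin.val_ne_zero_iff.2 hi
      exact add_one_eq_of_eq_two_mul_add_one hD₁ (by omega)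
  have h₂₁ : M.toBlocks₂₁ = 0 := by
    ext i j
    simp only [M, e, toBlocks₂₁, onesAboveHankel, of_apply, submatrix_apply, Matrix.zero_apply,
      evenOddEquiv_inr_ne_zero, if_false, evenOddEquiv_inl, evenOddEquiv_inr]
    exact add_one_eq_zero_of_eq_two_mul hD₀ (k := i + j) (by omega)
  have h₂₂ : M.toBlocks₂₂ = hankelMatrix D p := by
    ext i j
    simp only [M, e, toBlocks₂₂, onesAboveHankel, hankelMatrix, of_apply, submatrix_apply,
      evenOddEquiv_inr_ne_zero, if_false, evenOddEquiv_inr]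
    exact add_one_eq_of_eq_two_mul_add_one hD₁ (by omega)
  rw [← fromBlocks_toBlocks M, h₁₁, h₂₁, h₂₂, det_fromBlocks_zero₂₁]

theorem det_hankelMatrix_eq_one_and_det_onesAboveHankel_eq_one
    (hD₀ : ∀ k, D (2 * k) = 1) (hD₁ : ∀ k, D (2 * k + 1) = D k + 1) (n : ℕ) :
    (hankelMatrix D n).det = 1 ∧ (onesAboveHankel D n).det = 1 := by
  induction n using Nat.strong_induction_on with
  | _ n ih =>
  have hH : (hankelMatrix D n).det = 1 := by
    obtain ⟨m, rfl | rfl⟩ := Nat.even_or_odd' n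
    · rcases Nat.eq_zero_or_pos m with rfl | hm
      · simp [hankelMatrix]
      · rw [det_hankelMatrix_two_mul hD₀ hD₁, (ih m (by omega)).1, one_pow]
    · rw [det_hankelMatrix_two_mul_add_one hD₀ hD₁, (ih m (by omega)).2, one_pow]
  refine ⟨hH, ?_⟩
  rcases Nat.eq_zero_or_pos n with rfl | hn
  · simp [onesAboveHankel]
  · have hHp : (hankelMatrix D (n - n / 2)).det = 1 := by
      rcases (show n - n / 2 < n ∨ n - n / 2 = n by omega) with h | h
      · exact (ih _ h).1
      · rwa [h]
    rw [det_onesAboveHankel_of_add_eq hD₀ hD₁ (p := n - n / 2) (q := n / 2) (by omega)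
      (by omega) (by omega), (ih _ (by omega)).2, hHp, one_mul]

end ParityRecursion

section ThueMorse

variable {e : ℕ → ℤ}

theorem thueMorse_odd (h0 : e 0 = 1) (heven : ∀ k, e (2 * k) = e k)
    (hodd : ∀ k, e (2 * k + 1) = -e k) (n : ℕ) : Odd (e n) := by
  induction n using Nat.strong_induction_on with
  | _ n ih =>
  obtain ⟨m, rfl | rfl⟩ := Nat.even_or_odd' n
  · rcases Nat.eq_zero_or_pos m with rfl | hm
    · rw [h0]; exact odd_one
    · rw [heven]; exact ih m (by omega)
  · rw [hodd]; exact (ih m (by omega)).neg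

theorem thueMorse_half_diff_two_mul (heven : ∀ k, e (2 * k) = e k)
    (hodd : ∀ k, e (2 * k + 1) = -e k) (he : ∀ k, Odd (e k)) (k : ℕ) :
    (((e (2 * k + 1) - e (2 * k)) / 2 : ℤ) : ZMod 2) = 1 := by
  rw [hodd, heven, show -e k - e k = 2 * -e k by ring, Int.mul_ediv_cancel_left _ two_ne_zero]
  exact ZMod.intCast_eq_one_iff_odd.2 (he k).neg

theorem thueMorse_half_diff_two_mul_add_one (heven : ∀ k, e (2 * k) = e k)
    (hodd : ∀ k, e (2 * k + 1) = -e k) (he : ∀ k, Odd (e k)) (k : ℕ) :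
    (((e (2 * k + 1 + 1) - e (2 * k + 1)) / 2 : ℤ) : ZMod 2) =
      (((e (k + 1) - e k) / 2 : ℤ) : ZMod 2) + 1 := by
  rw [show 2 * k + 1 + 1 = 2 * (k + 1) by ring, heven, hodd,
    show e (k + 1) - -e k = e (k + 1) - e k + e k * 2 by ring,
    Int.add_mul_ediv_right _ _ two_ne_zero, Int.cast_add, ZMod.intCast_eq_one_iff_odd.2 (he k)]

end ThueMorse

/-- The Thue–Morse sequence on `{1, -1}` is Apwenian. -/
theorem thueMorse_apwenian (e : ℕ → ℤ)
    (h0 : e 0 = 1)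
    (heven : ∀ k, e (2 * k) = e k)
    (hodd : ∀ k, e (2 * k + 1) = - e k) :
    ∀ n : ℕ, 0 < n →
      (2 : ℤ) ^ (n - 1) ∣ hankel e n ∧ Odd (hankel e n / 2 ^ (n - 1)) := by
  intro n hn
  obtain ⟨n, rfl⟩ : ∃ m, n = m + 1 := ⟨n - 1, by omega⟩
  have he : ∀ k, Odd (e k) := thueMorse_odd h0 heven hodd
  obtain ⟨b, hb, hbD⟩ := hankel_of_odd e he n
  have hdet := (det_hankelMatrix_eq_one_and_det_onesAboveHankel_eq_one
    (D := fun k => (((e (k + 1) - e k) / 2 : ℤ) : ZMod 2))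
    (thueMorse_half_diff_two_mul heven hodd he) (thueMorse_half_diff_two_mul_add_one heven hodd he)
    n).2
  rw [Nat.add_sub_cancel, hb, Int.mul_ediv_cancel_left _ (by positivity)]
  exact ⟨dvd_mul_right _ _, ZMod.intCast_eq_one_iff_odd.1 (hbD.trans hdet)⟩
end

section
/- For every p ∈ P and q ∈ Q: (i) A_{p−1} ⊆ J and A_{q−1} ⊆ K; (ii) A_{q−1} ∩ J = ∅ and A_{p−1} ∩ K = ∅; (iii) β(A_{d−1} ∩ J) = J̄ and β(A_{d−1} ∩ K) = K̄, where β(k) = ⌊k/d⌋, and J̄ = J, K̄ = K if v_{d−1} = 1 while J̄ = K, K̄ = J if v_{d−1} = −1. -/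
/-!
Write `t + 1 = m * d ^ k` with `d ∤ m`. Membership of `t` in `J` or `K` depends only on the last
nonzero base-`d` digit `m % d` (in `P` or in `Q`) and, when `v (d - 1) = -1`, on the parity of
`k`. On the residue class `A (c - 1)` one has `t + 1 ≡ c (mod d)`, so `k = 0` and the digit is
`c`; this gives (i) and (ii). On `A (d - 1)` one has `t + 1 = d * (t / d + 1)`, so `t ↦ t / d`
strips one trailing zero: the digit is kept and `k` drops by one, which flips its parity and
hence swaps `J` and `K` when `v (d - 1) = -1`.
-/

open Set

def residueClass (d i : ℕ) : Set ℕ :=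
  {k | ∃ n, k = d * n + i}

/-- When `S ⊆ {1, …, d - 1}`, `t ∈ lastDigitSet d S E` says that `t + 1` has its last nonzero
base-`d` digit in `S` and a number of trailing zeros in `E`. -/
def lastDigitSet (d : ℕ) (S E : Set ℕ) : Set ℕ :=
  {t | ∃ n k c : ℕ, c ∈ S ∧ k ∈ E ∧ t + 1 = (d * n + c) * d ^ k}

section lastDigitSet

variable {d : ℕ} {S E : Set ℕ}

lemma lastDigitSet_range (f : ℕ → ℕ) :
    lastDigitSet d S (range f) =
      {t | ∃ n k c : ℕ, c ∈ S ∧ t + 1 = (d * n + c) * d ^ f k} := by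
  ext t
  constructor
  · rintro ⟨n, _, c, hc, ⟨k, rfl⟩, h⟩
    exact ⟨n, k, c, hc, h⟩
  · rintro ⟨n, k, c, hc, h⟩
    exact ⟨n, f k, c, hc, ⟨k, rfl⟩, h⟩

@[simp]
lemma lastDigitSet_empty : lastDigitSet d S ∅ = ∅ := by
  simp [lastDigitSet]

lemma residueClass_pred_subset_lastDigitSet {c : ℕ} (hc0 : 0 < c) (hc : c ∈ S) (hE : 0 ∈ E) :
    residueClass d (c - 1) ⊆ lastDigitSet d S E := by
  rintro _ ⟨n, rfl⟩
  exact ⟨n, 0, c, hc, hE, by rw [pow_zero, mul_one]; omega⟩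

lemma mod_mem_of_mem_lastDigitSet {t : ℕ} (hS : ∀ c ∈ S, c < d) (ht0 : (t + 1) % d ≠ 0)
    (ht : t ∈ lastDigitSet d S E) : (t + 1) % d ∈ S ∧ 0 ∈ E := by
  obtain ⟨n, k, c, hc, hk, h⟩ := ht
  cases k with
  | zero =>
    rw [h, pow_zero, mul_one, Nat.mul_add_mod, Nat.mod_eq_of_lt (hS c hc)]
    exact ⟨hc, hk⟩
  | succ k =>
    rw [h, pow_succ, ← mul_assoc, Nat.mul_mod_left] at ht0
    exact absurd rfl ht0

lemma residueClass_pred_inter_lastDigitSet {a : ℕ} (hS : ∀ c ∈ S, c < d) (ha0 : 0 < a)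
    (had : a < d) (h : a ∈ S → 0 ∉ E) :
    residueClass d (a - 1) ∩ lastDigitSet d S E = ∅ := by
  refine eq_empty_of_forall_notMem ?_
  rintro _ ⟨⟨n, rfl⟩, ht⟩
  have hmod : (d * n + (a - 1) + 1) % d = a := by
    rw [show d * n + (a - 1) + 1 = d * n + a by omega, Nat.mul_add_mod, Nat.mod_eq_of_lt had]
  obtain ⟨haS, hE⟩ := mod_mem_of_mem_lastDigitSet hS (by omega) ht
  exact h (hmod ▸ haS) hE

lemma mul_add_pred_mem_lastDigitSet_iff (hd : 0 < d) (hS : ∀ c ∈ S, 0 < c ∧ c < d) (s : ℕ) :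
    d * s + (d - 1) ∈ lastDigitSet d S E ↔ s ∈ lastDigitSet d S ((· + 1) ⁻¹' E) := by
  have hsucc : d * s + (d - 1) + 1 = d * (s + 1) := by rw [mul_add_one]; omega
  simp only [lastDigitSet, mem_ofPred_eq, mem_preimage, hsucc]
  constructor
  · rintro ⟨n, k, c, hc, hk, h⟩
    cases k with
    | zero =>
      have hmod := congrArg (· % d) h
      simp only [pow_zero, mul_one, Nat.mul_mod_right, Nat.mul_add_mod,
        Nat.mod_eq_of_lt (hS c hc).2] at hmod
      exact absurd hmod (hS c hc).1.ne
    | succ k =>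
      exact ⟨n, k, c, hc, hk, Nat.eq_of_mul_eq_mul_left hd (by rw [h, pow_succ]; ring)⟩
  · rintro ⟨n, k, c, hc, hk, h⟩
    exact ⟨n, k + 1, c, hc, hk, by rw [h, pow_succ]; ring⟩

lemma image_div_residueClass_pred_inter_lastDigitSet (hd : 0 < d)
    (hS : ∀ c ∈ S, 0 < c ∧ c < d) :
    (· / d) '' (residueClass d (d - 1) ∩ lastDigitSet d S E) =
      lastDigitSet d S ((· + 1) ⁻¹' E) := by
  have hdiv (s : ℕ) : (d * s + (d - 1)) / d = s := by
    rw [Nat.mul_add_div hd, Nat.div_eq_of_lt (by omega), add_zero]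
  ext s
  constructor
  · rintro ⟨_, ⟨⟨n, rfl⟩, ht⟩, rfl⟩
    show (d * n + (d - 1)) / d ∈ _
    rw [hdiv]
    exact (mul_add_pred_mem_lastDigitSet_iff hd hS n).1 ht
  · intro hs
    exact ⟨d * s + (d - 1), ⟨⟨s, rfl⟩, (mul_add_pred_mem_lastDigitSet_iff hd hS s).2 hs⟩,
      hdiv s⟩

lemma residueClass_lastDigitSet_union {S' E' : Set ℕ} (hS : ∀ c ∈ S, 0 < c ∧ c < d)
    (hS' : ∀ c ∈ S', 0 < c ∧ c < d) (hSS' : ∀ c ∈ S', c ∉ S)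
    (hE : 0 ∈ E) (hE' : 0 ∉ E')
    {c c' : ℕ} (hc : c ∈ S) (hc' : c' ∈ S') :
    residueClass d (c - 1) ⊆ lastDigitSet d S E ∪ lastDigitSet d S' E' ∧
    residueClass d (c' - 1) ∩ (lastDigitSet d S E ∪ lastDigitSet d S' E') = ∅ ∧
    (· / d) '' (residueClass d (d - 1) ∩ (lastDigitSet d S E ∪ lastDigitSet d S' E')) =
      lastDigitSet d S ((· + 1) ⁻¹' E) ∪ lastDigitSet d S' ((· + 1) ⁻¹' E') := by
  have hd : 0 < d := (hS c hc).1.trans (hS c hc).2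
  obtain ⟨hc'0, hc'd⟩ := hS' c' hc'
  refine ⟨(residueClass_pred_subset_lastDigitSet (hS c hc).1 hc hE).trans subset_union_left,
    ?_, ?_⟩
  · rw [inter_union_distrib_left, union_empty_iff]
    exact ⟨residueClass_pred_inter_lastDigitSet (fun c hc => (hS c hc).2) hc'0 hc'd
        fun h => (hSS' c' hc' h).elim,
      residueClass_pred_inter_lastDigitSet (fun c hc => (hS' c hc).2) hc'0 hc'd fun _ => hE'⟩
  · rw [inter_union_distrib_left, image_union,
      image_div_residueClass_pred_inter_lastDigitSet hd hS,
      image_div_residueClass_pred_inter_lastDigitSet hd hS']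

end lastDigitSet

lemma preimage_add_one_range_two_mul :
    (· + 1) ⁻¹' range (fun k => 2 * k) = range (fun k => 2 * k + 1) := by
  ext k
  simp only [mem_preimage, mem_range]
  constructor
  · rintro ⟨j, hj⟩
    exact ⟨j - 1, by omega⟩
  · rintro ⟨j, hj⟩
    exact ⟨j + 1, by omega⟩

lemma preimage_add_one_range_two_mul_add_one :
    (· + 1) ⁻¹' range (fun k => 2 * k + 1) = range (fun k => 2 * k) := by
  ext k
  simp only [mem_preimage, mem_range]
  constructor
  · rintro ⟨j, hj⟩
    exact ⟨j, by omega⟩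
  · rintro ⟨j, hj⟩
    exact ⟨j, by omega⟩

theorem J_K_set_lemma_general
    (d : ℕ)
    (v : ℕ → ℤ) (hv : ∀ i < d, v i = 1 ∨ v i = -1)
    (P Q J K : Set ℕ)
    (hP : P = {i | 1 ≤ i ∧ i ≤ d - 1 ∧ v (i - 1) ≠ v i})
    (hQ : Q = {i | 1 ≤ i ∧ i ≤ d - 1 ∧ v (i - 1) = v i})
    (hJKneg : v (d - 1) = -1 →
      J = {t | ∃ n k p : ℕ, p ∈ P ∧ t + 1 = (d * n + p) * d ^ (2 * k)} ∪
          {t | ∃ n k q : ℕ, q ∈ Q ∧ t + 1 = (d * n + q) * d ^ (2 * k + 1)} ∧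
      K = {t | ∃ n k q : ℕ, q ∈ Q ∧ t + 1 = (d * n + q) * d ^ (2 * k)} ∪
          {t | ∃ n k p : ℕ, p ∈ P ∧ t + 1 = (d * n + p) * d ^ (2 * k + 1)})
    (hJKpos : v (d - 1) = 1 →
      J = {t | ∃ n k p : ℕ, p ∈ P ∧ t + 1 = (d * n + p) * d ^ k} ∧
      K = {t | ∃ n k q : ℕ, q ∈ Q ∧ t + 1 = (d * n + q) * d ^ k})
    (A : ℕ → Set ℕ) (hA : ∀ i, A i = {k | ∃ n : ℕ, k = d * n + i}) :
    ∀ p ∈ P, ∀ q ∈ Q,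
      (A (p - 1) ⊆ J ∧ A (q - 1) ⊆ K) ∧
      (A (q - 1) ∩ J = ∅ ∧ A (p - 1) ∩ K = ∅) ∧
      (v (d - 1) = 1 →
        (fun k => k / d) '' (A (d - 1) ∩ J) = J ∧
        (fun k => k / d) '' (A (d - 1) ∩ K) = K) ∧
      (v (d - 1) = -1 →
        (fun k => k / d) '' (A (d - 1) ∩ J) = K ∧
        (fun k => k / d) '' (A (d - 1) ∩ K) = J) := by
  intro p hp q hq
  obtain rfl : A = residueClass d := funext hA
  have hPd : ∀ c ∈ P, 0 < c ∧ c < d := fun c hc => by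
    obtain ⟨h1, h2, -⟩ := hP ▸ hc; omega
  have hQd : ∀ c ∈ Q, 0 < c ∧ c < d := fun c hc => by
    obtain ⟨h1, h2, -⟩ := hQ ▸ hc; omega
  have hQP : ∀ c ∈ Q, c ∉ P := fun c hcQ hcP => by
    rw [hP] at hcP; rw [hQ] at hcQ; exact hcP.2.2 hcQ.2.2
  have hPQ : ∀ c ∈ P, c ∉ Q := fun c hcP hcQ => hQP c hcQ hcP
  rcases hv (d - 1) (by have := hPd p hp; omega) with hpos | hneg
  · -- an empty second part puts this case in the same two-part form as the case `v (d - 1) = -1`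
    obtain ⟨rfl, rfl⟩ : J = lastDigitSet d P univ ∪ lastDigitSet d Q ∅ ∧
        K = lastDigitSet d Q univ ∪ lastDigitSet d P ∅ := by
      simpa only [lastDigitSet_empty, union_empty, ← range_id, lastDigitSet_range, id_eq]
        using hJKpos hpos
    obtain ⟨hpJ, hqJ, hJ⟩ := residueClass_lastDigitSet_union hPd hQd hQP (mem_univ 0)
      (notMem_empty 0) hp hq
    obtain ⟨hqK, hpK, hK⟩ := residueClass_lastDigitSet_union hQd hPd hPQ (mem_univ 0)
      (notMem_empty 0) hq hp
    rw [preimage_univ, preimage_empty] at hJ hK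
    exact ⟨⟨hpJ, hqK⟩, ⟨hqJ, hpK⟩, fun _ => ⟨hJ, hK⟩, fun h => by omega⟩
  · obtain ⟨rfl, rfl⟩ := hJKneg hneg
    simp only [← lastDigitSet_range (f := fun k => 2 * k),
      ← lastDigitSet_range (f := fun k => 2 * k + 1)]
    have hE : 0 ∈ range (fun k => 2 * k) := ⟨0, rfl⟩
    have hE' : 0 ∉ range (fun k => 2 * k + 1) := fun ⟨_, hk⟩ => Nat.succ_ne_zero _ hk
    obtain ⟨hpJ, hqJ, hJ⟩ := residueClass_lastDigitSet_union hPd hQd hQP hE hE' hp hq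
    obtain ⟨hqK, hpK, hK⟩ := residueClass_lastDigitSet_union hQd hPd hPQ hE hE' hq hp
    rw [preimage_add_one_range_two_mul, preimage_add_one_range_two_mul_add_one] at hJ hK
    exact ⟨⟨hpJ, hqK⟩, ⟨hqJ, hpK⟩, fun h => by omega,
      fun _ => ⟨hJ.trans (union_comm _ _), hK.trans (union_comm _ _)⟩⟩

/-- Lemma on the sets `J`, `K` and the residue classes `A_i`:
(i) `A_{p−1} ⊆ J` and `A_{q−1} ⊆ K`; (ii) `A_{q−1} ∩ J = ∅` and
`A_{p−1} ∩ K = ∅`; (iii) `β(A_{d−1} ∩ J) = J̄` and `β(A_{d−1} ∩ K) = K̄`. -/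
theorem J_K_set_lemma
    (d : ℕ) (hd : 1 ≤ d)
    (v : ℕ → ℤ) (hv0 : v 0 = 1) (hv : ∀ i < d, v i = 1 ∨ v i = -1)
    (P Q J K : Set ℕ)
    (hP : P = {i | 1 ≤ i ∧ i ≤ d - 1 ∧ v (i - 1) ≠ v i})
    (hQ : Q = {i | 1 ≤ i ∧ i ≤ d - 1 ∧ v (i - 1) = v i})
    (hJKneg : v (d - 1) = -1 →
      J = {t | ∃ n k p : ℕ, p ∈ P ∧ t + 1 = (d * n + p) * d ^ (2 * k)} ∪
          {t | ∃ n k q : ℕ, q ∈ Q ∧ t + 1 = (d * n + q) * d ^ (2 * k + 1)} ∧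
      K = {t | ∃ n k q : ℕ, q ∈ Q ∧ t + 1 = (d * n + q) * d ^ (2 * k)} ∪
          {t | ∃ n k p : ℕ, p ∈ P ∧ t + 1 = (d * n + p) * d ^ (2 * k + 1)})
    (hJKpos : v (d - 1) = 1 →
      J = {t | ∃ n k p : ℕ, p ∈ P ∧ t + 1 = (d * n + p) * d ^ k} ∧
      K = {t | ∃ n k q : ℕ, q ∈ Q ∧ t + 1 = (d * n + q) * d ^ k})
    (A : ℕ → Set ℕ) (hA : ∀ i, A i = {k | ∃ n : ℕ, k = d * n + i}) :
    ∀ p ∈ P, ∀ q ∈ Q,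
      (A (p - 1) ⊆ J ∧ A (q - 1) ⊆ K) ∧
      (A (q - 1) ∩ J = ∅ ∧ A (p - 1) ∩ K = ∅) ∧
      (v (d - 1) = 1 →
        (fun k => k / d) '' (A (d - 1) ∩ J) = J ∧
        (fun k => k / d) '' (A (d - 1) ∩ K) = K) ∧
      (v (d - 1) = -1 →
        (fun k => k / d) '' (A (d - 1) ∩ J) = K ∧
        (fun k => k / d) '' (A (d - 1) ∩ K) = J) :=
  J_K_set_lemma_general d v hv P Q J K hP hQ hJKneg hJKpos A hA
end
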